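/- For the 10×10 matrix S of the quantum double of the 2D2 subfactor, every entry of row 1 of S is nonzero, and for all indices i, j, k ∈ {1,…,10} the Verlinde number ∑_{r=1}^{10} S_{i r}·S_{j r}·conj(S_{k r}) / S_{1 r} is a nonnegative integer. -/

import Mathlib

open Complex Matrix

noncomputable section

/-- The 10×10 S-matrix of the quantum double of the 2D2 subfactor of index `3+√5`. -/
def S2D2 : Matrix (Fin 10) (Fin 10) ℂ := (20 : ℂ)⁻¹ •
  !![5 - 2 * (Real.sqrt 5 : ℂ), 5 + 2 * (Real.sqrt 5 : ℂ), 5, 5, 5, 5, 5, 5,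
       4 * (Real.sqrt 5 : ℂ), 4 * (Real.sqrt 5 : ℂ);
     5 + 2 * (Real.sqrt 5 : ℂ), 5 - 2 * (Real.sqrt 5 : ℂ), 5, 5, 5, 5, 5, 5,
       -(4 * (Real.sqrt 5 : ℂ)), -(4 * (Real.sqrt 5 : ℂ));
     5, 5, 15, -5, -5, -5, -5, -5, 0, 0;
     5, 5, -5, 15, -5, -5, -5, -5, 0, 0;
     5, 5, -5, -5, -5 + 10 * I, -5 - 10 * I, 5, 5, 0, 0;
     5, 5, -5, -5, -5 - 10 * I, -5 + 10 * I, 5, 5, 0, 0;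
     5, 5, -5, -5, 5, 5, -5 - 10 * I, -5 + 10 * I, 0, 0;
     5, 5, -5, -5, 5, 5, -5 + 10 * I, -5 - 10 * I, 0, 0;
     4 * (Real.sqrt 5 : ℂ), -(4 * (Real.sqrt 5 : ℂ)), 0, 0, 0, 0, 0, 0,
       -10 + 2 * (Real.sqrt 5 : ℂ), 10 + 2 * (Real.sqrt 5 : ℂ);
     4 * (Real.sqrt 5 : ℂ), -(4 * (Real.sqrt 5 : ℂ)), 0, 0, 0, 0, 0, 0,
       10 + 2 * (Real.sqrt 5 : ℂ), -10 + 2 * (Real.sqrt 5 : ℂ)]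

/-!
Every entry of `20 • S2D2` lies in `ℤ[√5, i]`, and every entry of the first row divides `20`
there. Hence `20³` times a Verlinde number is the image in `ℂ` of an explicit element of
`ℤ[√5, i]`, and exact evaluation of these `1000` elements shows each to be `20³ = 8000`
times a natural number.
-/

open ComplexConjugate

section VerlindeSum

variable {n R : Type*} [CommRing R] (φ : R →+* ℂ) {A : Matrix n n R} {t : n → R} {m : ℕ}
  {i₀ : n}

lemma inv_smul_map_mul_eq_one (hm : m ≠ 0) (ht : ∀ r, A i₀ r * t r = m) (r : n) :
    ((m : ℂ)⁻¹ • A.map φ) i₀ r * φ (t r) = 1 := by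
  rw [Matrix.smul_apply, map_apply, smul_eq_mul, mul_assoc, ← map_mul, ht, map_natCast,
    inv_mul_cancel₀ (Nat.cast_ne_zero.mpr hm)]

lemma verlinde_sum_eq_map_div_pow [Fintype n] [StarRing R]
    (hφ : ∀ x, φ (star x) = conj (φ x)) (hm : m ≠ 0) (ht : ∀ r, A i₀ r * t r = m)
    (i j k : n) :
    ∑ r, ((m : ℂ)⁻¹ • A.map φ) i r * ((m : ℂ)⁻¹ • A.map φ) j r *
        conj (((m : ℂ)⁻¹ • A.map φ) k r) / ((m : ℂ)⁻¹ • A.map φ) i₀ r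
      = φ (∑ r, A i r * A j r * star (A k r) * t r) / m ^ 3 := by
  rw [map_sum, Finset.sum_div]
  refine Finset.sum_congr rfl fun r _ => ?_
  rw [div_eq_mul_inv, inv_eq_of_mul_eq_one_right (inv_smul_map_mul_eq_one φ hm ht r)]
  simp only [Matrix.smul_apply, map_apply, smul_eq_mul, map_mul, hφ, map_inv₀, map_natCast]
  ring

end VerlindeSum

abbrev ZSqrt5 := QuadraticAlgebra ℤ 5 0

abbrev ZSqrt5I := QuadraticAlgebra ZSqrt5 (-1) 0

namespace ZSqrt5

def toComplex : ZSqrt5 →+* ℂ :=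
  (QuadraticAlgebra.lift ⟨(Real.sqrt 5 : ℂ), by
    rw [← ofReal_mul, Real.mul_self_sqrt (by norm_num)]; simp⟩).toRingHom

lemma toComplex_apply (x : ZSqrt5) : toComplex x = (x.re + x.im * Real.sqrt 5 : ℝ) := by
  simp [toComplex]

lemma conj_toComplex (x : ZSqrt5) : conj (toComplex x) = toComplex x := by
  rw [toComplex_apply, conj_ofReal]

end ZSqrt5

namespace ZSqrt5I

def sqrt5 : ZSqrt5I := ⟨⟨0, 1⟩, 0⟩

def I : ZSqrt5I := ⟨0, 1⟩

def toComplex : ZSqrt5I →+* ℂ :=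
  letI := ZSqrt5.toComplex.toAlgebra
  (QuadraticAlgebra.lift ⟨Complex.I, by simp [Algebra.smul_def]⟩).toRingHom

lemma toComplex_apply (x : ZSqrt5I) :
    toComplex x = ZSqrt5.toComplex x.re + ZSqrt5.toComplex x.im * Complex.I := by
  let := ZSqrt5.toComplex.toAlgebra
  simp [toComplex, Algebra.smul_def, RingHom.algebraMap_toAlgebra]

lemma toComplex_star (x : ZSqrt5I) : toComplex (star x) = conj (toComplex x) := by
  simp [toComplex_apply, ZSqrt5.conj_toComplex]

@[simp]
lemma toComplex_sqrt5 : toComplex sqrt5 = Real.sqrt 5 := by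
  simp [toComplex_apply, ZSqrt5.toComplex_apply, sqrt5]

@[simp]
lemma toComplex_I : toComplex I = Complex.I := by
  simp [toComplex_apply, ZSqrt5.toComplex_apply, I, QuadraticAlgebra.re_one,
    QuadraticAlgebra.im_one]

def scaledS2D2 : Matrix (Fin 10) (Fin 10) ZSqrt5I :=
  !![5 - 2 * sqrt5, 5 + 2 * sqrt5, 5, 5, 5, 5, 5, 5, 4 * sqrt5, 4 * sqrt5;
     5 + 2 * sqrt5, 5 - 2 * sqrt5, 5, 5, 5, 5, 5, 5, -(4 * sqrt5), -(4 * sqrt5);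
     5, 5, 15, -5, -5, -5, -5, -5, 0, 0;
     5, 5, -5, 15, -5, -5, -5, -5, 0, 0;
     5, 5, -5, -5, -5 + 10 * I, -5 - 10 * I, 5, 5, 0, 0;
     5, 5, -5, -5, -5 - 10 * I, -5 + 10 * I, 5, 5, 0, 0;
     5, 5, -5, -5, 5, 5, -5 - 10 * I, -5 + 10 * I, 0, 0;
     5, 5, -5, -5, 5, 5, -5 + 10 * I, -5 - 10 * I, 0, 0;
     4 * sqrt5, -(4 * sqrt5), 0, 0, 0, 0, 0, 0, -10 + 2 * sqrt5, 10 + 2 * sqrt5;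
     4 * sqrt5, -(4 * sqrt5), 0, 0, 0, 0, 0, 0, 10 + 2 * sqrt5, -10 + 2 * sqrt5]

def invFirstRow : Fin 10 → ZSqrt5I :=
  ![20 + 8 * sqrt5, 20 - 8 * sqrt5, 4, 4, 4, 4, 4, 4, sqrt5, sqrt5]

def verlindeNumerator (i j k : Fin 10) : ZSqrt5I :=
  ∑ r, scaledS2D2 i r * scaledS2D2 j r * star (scaledS2D2 k r) * invFirstRow r

-- `verlindeNumerator_eq` certifies that the division and `toNat` lose nothing.
def fusionCoeff (i j k : Fin 10) : ℕ := ((verlindeNumerator i j k).re.re / 8000).toNat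

lemma S2D2_eq_inv_smul_map : S2D2 = ((20 : ℕ) : ℂ)⁻¹ • scaledS2D2.map toComplex := by
  rw [S2D2, scaledS2D2, Nat.cast_ofNat]
  congr 1
  ext i j
  fin_cases i <;> fin_cases j <;> simp [map_ofNat]

lemma scaledS2D2_zero_mul_invFirstRow :
    ∀ r, scaledS2D2 0 r * invFirstRow r = ((20 : ℕ) : ZSqrt5I) := by
  decide +kernel

lemma verlindeNumerator_eq :
    ∀ i j k, verlindeNumerator i j k = ((8000 * fusionCoeff i j k : ℕ) : ZSqrt5I) := by
  decide +kernel

end ZSqrt5I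

/-- Verlinde formula for the S-matrix of the quantum double of the 2D2 subfactor:
every entry of the first row is nonzero, and all the Verlinde numbers
`∑_r S_{ir} S_{jr} conj(S_{kr}) / S_{1r}` are nonnegative integers. -/
theorem S2D2_verlinde :
    (∀ r : Fin 10, S2D2 0 r ≠ 0) ∧
      ∀ i j k : Fin 10, ∃ n : ℕ,
        ∑ r : Fin 10, S2D2 i r * S2D2 j r * (starRingEnd ℂ) (S2D2 k r) / S2D2 0 r
          = (n : ℂ) := by
  have h20 : (20 : ℕ) ≠ 0 := by norm_num
  have ht := ZSqrt5I.scaledS2D2_zero_mul_invFirstRow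
  rw [ZSqrt5I.S2D2_eq_inv_smul_map]
  refine ⟨fun r => left_ne_zero_of_mul_eq_one
    (inv_smul_map_mul_eq_one ZSqrt5I.toComplex h20 ht r), fun i j k => ?_⟩
  refine ⟨ZSqrt5I.fusionCoeff i j k, ?_⟩
  rw [verlinde_sum_eq_map_div_pow ZSqrt5I.toComplex ZSqrt5I.toComplex_star h20 ht,
    ← ZSqrt5I.verlindeNumerator, ZSqrt5I.verlindeNumerator_eq, map_natCast]
  push_cast
  ring

end
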